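/- For every pLTL formula φ, ψ, infinite word w : ℕ → Set AP, position i ∈ ℕ and valuation v : Var → ℕ: (1) (w,i,v) ⊨ φ U_{≤x} ψ if and only if (w,i,v) ⊨ (φ U ψ) ∧ ◇_{≤x}ψ; and (2) (w,i,v) ⊨ φ U_{>x} ψ if and only if (w,i,v) ⊨ □_{≤x}(φ ∧ ○(φ U ψ)). -/
import Mathlib


/-- Syntax of pLTL with the parametrized until operators U_{≤x} and U_{>x} as primitives:
φ ::= a | ¬φ | φ∧φ | ○φ | φUφ | ◇_{≤x}φ | φU_{≤x}φ | φU_{>x}φ. -/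
inductive PLTL (AP Var : Type) : Type
  | atom : AP → PLTL AP Var
  | not : PLTL AP Var → PLTL AP Var
  | and : PLTL AP Var → PLTL AP Var → PLTL AP Var
  | next : PLTL AP Var → PLTL AP Var
  | untl : PLTL AP Var → PLTL AP Var → PLTL AP Var
  | evLe : Var → PLTL AP Var → PLTL AP Var
  | untilLe : Var → PLTL AP Var → PLTL AP Var → PLTL AP Var
  | untilGt : Var → PLTL AP Var → PLTL AP Var → PLTL AP Var

/-- Satisfaction relation `(w,i,v) ⊨ φ`. -/
def PLTL.Sat {AP Var : Type} (w : ℕ → Set AP) : ℕ → (Var → ℕ) → PLTL AP Var → Prop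
  | i, _, atom a => a ∈ w i
  | i, v, not φ => ¬ PLTL.Sat w i v φ
  | i, v, and φ ψ => PLTL.Sat w i v φ ∧ PLTL.Sat w i v ψ
  | i, v, next φ => PLTL.Sat w (i + 1) v φ
  | i, v, untl φ ψ =>
      ∃ j, i ≤ j ∧ PLTL.Sat w j v ψ ∧ ∀ k, i ≤ k → k < j → PLTL.Sat w k v φ
  | i, v, evLe x φ => ∃ j, i ≤ j ∧ j ≤ v x + i ∧ PLTL.Sat w j v φ
  | i, v, untilLe x φ ψ =>
      ∃ j, i ≤ j ∧ j ≤ v x + i ∧ PLTL.Sat w j v ψ ∧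
        ∀ k, i ≤ k → k < j → PLTL.Sat w k v φ
  | i, v, untilGt x φ ψ =>
      ∃ j, v x + i < j ∧ PLTL.Sat w j v ψ ∧ ∀ k, i ≤ k → k < j → PLTL.Sat w k v φ

/-- □_{≤x}φ := ¬◇_{≤x}¬φ. -/
def PLTL.boxLe {AP Var : Type} (x : Var) (φ : PLTL AP Var) : PLTL AP Var :=
  PLTL.not (PLTL.evLe x (PLTL.not φ))

/-- (1) φ U_{≤x} ψ ≡ (φ U ψ) ∧ ◇_{≤x}ψ  and  (2) φ U_{>x} ψ ≡ □_{≤x}(φ ∧ ○(φ U ψ)). -/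
theorem pLTL_untilLe_untilGt_equiv {AP Var : Type} (φ ψ : PLTL AP Var)
    (w : ℕ → Set AP) (i : ℕ) (v : Var → ℕ) (x : Var) :
    (PLTL.Sat w i v (PLTL.untilLe x φ ψ) ↔
      PLTL.Sat w i v (PLTL.and (PLTL.untl φ ψ) (PLTL.evLe x ψ))) ∧
    (PLTL.Sat w i v (PLTL.untilGt x φ ψ) ↔
      PLTL.Sat w i v (PLTL.boxLe x (PLTL.and φ (PLTL.next (PLTL.untl φ ψ))))) := by
  constructor
  · simp only [PLTL.Sat]
    constructor
    · rintro ⟨j, hij, hjle, hψ, hφ⟩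
      exact ⟨⟨j, hij, hψ, hφ⟩, ⟨j, hij, hjle, hψ⟩⟩
    · rintro ⟨⟨j, hij, hψ, hφ⟩, ⟨j', hij', hjle', hψ'⟩⟩
      rcases le_or_gt j j' with h | h
      · exact ⟨j, hij, le_trans h hjle', hψ, hφ⟩
      · exact ⟨j', hij', hjle', hψ', fun k hk hk' => hφ k hk (hk'.trans h)⟩
  · simp only [PLTL.Sat, PLTL.boxLe]
    push_neg
    constructor
    · rintro ⟨j, hgt, hψ, hφ⟩ k hik hkle
      have hkj : k < j := lt_of_le_of_lt hkle hgt
      refine ⟨hφ k hik hkj, j, by omega, hψ, fun m hm hm' => hφ m (by omega) hm'⟩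
    · intro h
      obtain ⟨hφv, j, hj1, hψ, hφ'⟩ := h (v x + i) (by omega) le_rfl
      refine ⟨j, by omega, hψ, fun k hik hkj => ?_⟩
      rcases le_or_gt k (v x + i) with hk | hk
      · exact (h k hik hk).1
      · exact hφ' k (by omega) hkj
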